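/- arXiv:2604.01557 — 2 statements merged into one kernel-verified Lean document; each statement's English description precedes it below -/
import Mathlib

section
/- Let 0 < q ≤ p ≤ 1/2 and suppose p/q ≤ 1 + ε for some ε ≥ 0. Then φ(Φ⁻¹(p)) ≥ φ(Φ⁻¹(q)) ≥ φ(Φ⁻¹(p))/(1 + ε). -/
open Real

/-- Standard Gaussian density. -/
noncomputable def gphi (x : ℝ) : ℝ := (Real.sqrt (2 * Real.pi))⁻¹ * Real.exp (-(x ^ 2) / 2)

/-- Standard Gaussian CDF. -/
noncomputable def Phi (r : ℝ) : ℝ := ∫ x in Set.Iic r, gphi x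

/-- Inverse of the standard Gaussian CDF (on (0,1)). -/
noncomputable def PhiInv : ℝ → ℝ := Function.invFun Phi

open MeasureTheory Set Filter Topology

lemma gphi_eq (x : ℝ) : gphi x = (Real.sqrt (2 * Real.pi))⁻¹ * Real.exp (-(1/2) * x ^ 2) := by
  unfold gphi; congr 2; ring

lemma gphi_pos (x : ℝ) : 0 < gphi x := by
  have : 0 < Real.sqrt (2 * Real.pi) := Real.sqrt_pos.2 (by positivity)
  exact mul_pos (inv_pos.2 this) (Real.exp_pos _)

lemma continuous_gphi : Continuous gphi := by
  unfold gphi; fun_prop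

lemma integrable_gphi : Integrable gphi := by
  have : Integrable (fun x : ℝ => Real.exp (-(1/2) * x ^ 2)) := integrable_exp_neg_mul_sq (by norm_num)
  have h := this.const_mul (Real.sqrt (2 * Real.pi))⁻¹
  refine h.congr (by filter_upwards with x using (gphi_eq x).symm)

lemma integral_gphi : ∫ x, gphi x = 1 := by
  have h : ∫ x : ℝ, Real.exp (-(1/2) * x ^ 2) = Real.sqrt (π / (1/2)) := integral_gaussian (1/2)
  have h2 : ∫ x, gphi x = (Real.sqrt (2 * Real.pi))⁻¹ * ∫ x : ℝ, Real.exp (-(1/2) * x ^ 2) := by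
    rw [← MeasureTheory.integral_const_mul]
    exact integral_congr_ae (by filter_upwards with x using gphi_eq x)
  rw [h2, h]
  have : π / (1/2) = 2 * π := by ring
  rw [this, inv_mul_cancel₀]
  exact ne_of_gt (Real.sqrt_pos.2 (by positivity))

lemma hasDerivAt_gphi (x : ℝ) : HasDerivAt gphi (-x * gphi x) x := by
  have h1 : HasDerivAt (fun x : ℝ => -(x ^ 2) / 2) (-x) x := by
    have := (hasDerivAt_pow 2 x).neg.div_const 2
    simpa using this.congr_deriv (by ring)
  have h2 := (h1.exp).const_mul (Real.sqrt (2 * Real.pi))⁻¹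
  have h3 : HasDerivAt gphi ((Real.sqrt (2 * Real.pi))⁻¹ * (Real.exp (-(x ^ 2) / 2) * (-x))) x := h2
  have heq : (Real.sqrt (2 * Real.pi))⁻¹ * (Real.exp (-(x ^ 2) / 2) * (-x)) = -x * gphi x := by
    unfold gphi; ring
  exact heq ▸ h3

lemma Phi_sub (x y : ℝ) : Phi y - Phi x = ∫ t in x..y, gphi t :=
  intervalIntegral.integral_Iic_sub_Iic integrable_gphi.integrableOn integrable_gphi.integrableOn

lemma strictMono_Phi : StrictMono Phi := by
  intro x y hxy
  have h := Phi_sub x y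
  have hpos : 0 < ∫ t in x..y, gphi t :=
    intervalIntegral.intervalIntegral_pos_of_pos
      (integrable_gphi.intervalIntegrable) gphi_pos hxy
  linarith

lemma hasDerivAt_Phi (x : ℝ) : HasDerivAt Phi (gphi x) x := by
  have key : ∀ u : ℝ, Phi u = Phi 0 + ∫ t in (0:ℝ)..u, gphi t := by
    intro u
    have := Phi_sub 0 u
    linarith
  have h : HasDerivAt (fun u => Phi 0 + ∫ t in (0:ℝ)..u, gphi t) (gphi x) x := by
    refine (HasDerivAt.const_add _ ?_)
    exact intervalIntegral.integral_hasDerivAt_right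
      integrable_gphi.intervalIntegrable
      (continuous_gphi.stronglyMeasurableAtFilter _ _)
      continuous_gphi.continuousAt
  exact h.congr_of_eventuallyEq (by filter_upwards with u using (key u))

lemma continuous_Phi : Continuous Phi := by
  have : Differentiable ℝ Phi := fun x => (hasDerivAt_Phi x).differentiableAt
  exact this.continuous

lemma Phi_pos (x : ℝ) : 0 < Phi x := by
  have h := Phi_sub (x - 1) x
  have hpos : 0 < ∫ t in (x-1)..x, gphi t :=
    intervalIntegral.intervalIntegral_pos_of_pos
      (integrable_gphi.intervalIntegrable) gphi_pos (by linarith)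
  have hnn : 0 ≤ Phi (x - 1) :=
    MeasureTheory.setIntegral_nonneg measurableSet_Iic (fun t _ => (gphi_pos t).le)
  linarith

lemma Phi_zero : Phi 0 = 1 / 2 := by
  have heven : ∀ x : ℝ, gphi (-x) = gphi x := by
    intro x; unfold gphi; ring_nf
  have h1 : Phi 0 = ∫ x in Ioi (0:ℝ), gphi x := by
    have := integral_comp_neg_Iic (0:ℝ) gphi
    simp only [heven, neg_zero] at this
    rw [Phi, this]
  have h2 : Phi 0 + ∫ x in Ioi (0:ℝ), gphi x = 1 := by
    rw [Phi, intervalIntegral.integral_Iic_add_Ioi integrable_gphi.integrableOn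
      integrable_gphi.integrableOn, integral_gphi]
  linarith [h1, h2]

lemma tendsto_Phi_atBot : Tendsto Phi atBot (𝓝 0) := by
  have h : Tendsto (fun i : ℝ => ∫ x in Iic (-i), gphi x) atTop (𝓝 (∫ x in ⋂ i : ℝ, Iic (-i), gphi x)) := by
    apply MeasureTheory.tendsto_setIntegral_of_antitone (fun i => measurableSet_Iic)
    · intro i j hij
      exact Iic_subset_Iic.2 (by linarith)
    · exact ⟨0, integrable_gphi.integrableOn⟩
  have hempty : (⋂ i : ℝ, Iic (-i)) = ∅ := by
    ext x; simp only [mem_iInter, mem_Iic, mem_empty_iff_false, iff_false, not_forall, not_le]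
    exact ⟨-(x - 1), by linarith⟩
  rw [hempty] at h
  simp only [MeasureTheory.setIntegral_empty] at h
  have h2 := h.comp (tendsto_neg_atBot_atTop : Tendsto (fun x : ℝ => -x) atBot atTop)
  refine h2.congr (fun x => ?_)
  simp [Phi, Function.comp]

lemma exists_Phi_eq {y : ℝ} (h0 : 0 < y) (h2 : y ≤ 1 / 2) : ∃ x ≤ 0, Phi x = y := by
  obtain ⟨a, ha⟩ : ∃ a, Phi a < y := by
    have := tendsto_Phi_atBot.eventually_lt_const h0
    exact this.exists
  have ha0 : a ≤ 0 := by
    by_contra h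
    push_neg at h
    have := strictMono_Phi h
    rw [Phi_zero] at this
    linarith
  have := intermediate_value_Icc ha0 continuous_Phi.continuousOn
    (by rw [Phi_zero]; exact ⟨ha.le, h2⟩ : y ∈ Icc (Phi a) (Phi 0))
  obtain ⟨x, hx, hxy⟩ := this
  exact ⟨x, hx.2, hxy⟩

lemma Phi_PhiInv {y : ℝ} (h0 : 0 < y) (h2 : y ≤ 1 / 2) : Phi (PhiInv y) = y := by
  obtain ⟨x, _, hx⟩ := exists_Phi_eq h0 h2
  exact Function.invFun_eq ⟨x, hx⟩

lemma PhiInv_nonpos {y : ℝ} (h0 : 0 < y) (h2 : y ≤ 1 / 2) : PhiInv y ≤ 0 := by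
  have h := Phi_PhiInv h0 h2
  by_contra hpos
  push_neg at hpos
  have := strictMono_Phi hpos
  rw [Phi_zero, h] at this
  linarith

lemma integrable_mul_gphi : Integrable (fun t : ℝ => -t * gphi t) := by
  have hbase : Integrable (fun t : ℝ => Real.exp (-(1/4) * t ^ 2)) :=
    integrable_exp_neg_mul_sq (by norm_num)
  have h := (hbase.const_mul (4 * (Real.sqrt (2 * Real.pi))⁻¹))
  refine h.mono' ?_ ?_
  · exact (continuous_id.neg.mul continuous_gphi).aestronglyMeasurable
  · filter_upwards with t
    have ht : |t| ≤ 4 * Real.exp (t ^ 2 / 4) := by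
      have h1 := Real.add_one_le_exp (t ^ 2 / 4)
      rcases le_or_gt (|t|) 4 with h4 | h4
      · have : (1:ℝ) ≤ Real.exp (t ^ 2 / 4) := Real.one_le_exp (by positivity)
        nlinarith
      · have h2 : |t| ≤ t ^ 2 / 4 := by
          nlinarith [sq_abs t, abs_nonneg t]
        nlinarith
    have hs : (0:ℝ) < Real.sqrt (2 * Real.pi) := Real.sqrt_pos.2 (by positivity)
    rw [Real.norm_eq_abs, abs_mul, abs_neg]
    have hgabs : |gphi t| = (Real.sqrt (2 * Real.pi))⁻¹ * Real.exp (-(t ^ 2) / 2) :=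
      abs_of_pos (gphi_pos t)
    rw [hgabs]
    have hexp : Real.exp (t ^ 2 / 4) * Real.exp (-(t ^ 2) / 2) = Real.exp (-(1/4) * t ^ 2) := by
      rw [← Real.exp_add]; ring_nf
    calc |t| * ((Real.sqrt (2 * Real.pi))⁻¹ * Real.exp (-(t ^ 2) / 2))
        ≤ 4 * Real.exp (t ^ 2 / 4) * ((Real.sqrt (2 * Real.pi))⁻¹ * Real.exp (-(t ^ 2) / 2)) := by
          apply mul_le_mul_of_nonneg_right ht
          positivity
      _ = 4 * (Real.sqrt (2 * Real.pi))⁻¹ * (Real.exp (t ^ 2 / 4) * Real.exp (-(t ^ 2) / 2)) := by ring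
      _ = 4 * (Real.sqrt (2 * Real.pi))⁻¹ * Real.exp (-(1/4) * t ^ 2) := by rw [hexp]

lemma tendsto_gphi_atBot : Tendsto gphi atBot (𝓝 0) := by
  have hsq : Tendsto (fun x : ℝ => x ^ 2) atBot atTop := by
    have h := (tendsto_pow_atTop (two_ne_zero)).comp (tendsto_neg_atBot_atTop : Tendsto (fun x : ℝ => -x) atBot atTop)
    refine h.congr (fun x => ?_)
    simp [Function.comp, neg_pow]
  have h1 : Tendsto (fun x : ℝ => -(x ^ 2) / 2) atBot atBot := by
    apply Tendsto.atBot_div_const (by norm_num : (0:ℝ) < 2)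
    exact tendsto_neg_atTop_atBot.comp hsq
  have h2 : Tendsto (fun x : ℝ => Real.exp (-(x ^ 2) / 2)) atBot (𝓝 0) :=
    Real.tendsto_exp_atBot.comp h1
  have h3 := h2.const_mul (Real.sqrt (2 * Real.pi))⁻¹
  rw [mul_zero] at h3
  exact h3.congr (fun x => rfl)

lemma integral_neg_mul_gphi (x : ℝ) : ∫ t in Iic x, -t * gphi t = gphi x := by
  have := MeasureTheory.integral_Iic_of_hasDerivAt_of_tendsto'
    (f := gphi) (f' := fun t => -t * gphi t) (a := x)
    (fun t _ => hasDerivAt_gphi t)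
    integrable_mul_gphi.integrableOn
    tendsto_gphi_atBot
  simpa using this

lemma mills (x : ℝ) (hx : x ≤ 0) : 0 ≤ x * Phi x + gphi x := by
  rcases eq_or_lt_of_le hx with rfl | hx'
  · have := gphi_pos 0; have := Phi_pos 0; nlinarith
  have key : -x * Phi x ≤ gphi x := by
    have h1 : -x * Phi x = ∫ t in Iic x, -x * gphi t := by
      rw [Phi, ← MeasureTheory.integral_const_mul]
    rw [h1, ← integral_neg_mul_gphi x]
    apply MeasureTheory.setIntegral_mono_on
    · exact (integrable_gphi.const_mul (-x)).integrableOn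
    · exact integrable_mul_gphi.integrableOn
    · exact measurableSet_Iic
    · intro t ht
      have : -x ≤ -t := by simp only [mem_Iic] at ht; linarith
      exact mul_le_mul_of_nonneg_right this (gphi_pos t).le
  linarith

lemma mills' (x : ℝ) : 0 ≤ x * Phi x + gphi x := by
  rcases le_or_gt x 0 with hx | hx
  · exact mills x hx
  · have := Phi_pos x
    have := gphi_pos x
    nlinarith

lemma antitone_ratio : Antitone (fun x => gphi x / Phi x) := by
  have hderiv : ∀ x : ℝ, HasDerivAt (fun x => gphi x / Phi x)
      ((-x * gphi x * Phi x - gphi x * gphi x) / (Phi x) ^ 2) x := fun x =>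
    (hasDerivAt_gphi x).div (hasDerivAt_Phi x) (Phi_pos x).ne'
  apply antitone_of_deriv_nonpos
  · exact fun x => (hderiv x).differentiableAt
  · intro x
    rw [(hderiv x).deriv]
    apply div_nonpos_of_nonpos_of_nonneg
    · have h := mills' x
      have hg := gphi_pos x
      nlinarith
    · positivity

theorem stmt0 (p q ε : ℝ) (hq0 : 0 < q) (hqp : q ≤ p) (hp : p ≤ 1 / 2)
    (hε : 0 ≤ ε) (hratio : p / q ≤ 1 + ε) :
    gphi (PhiInv q) ≤ gphi (PhiInv p) ∧
      gphi (PhiInv p) / (1 + ε) ≤ gphi (PhiInv q) := by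
  have hp0 : 0 < p := lt_of_lt_of_le hq0 hqp
  have hq2 : q ≤ 1 / 2 := hqp.trans hp
  set x := PhiInv q with hxdef
  set y := PhiInv p with hydef
  have hPx : Phi x = q := Phi_PhiInv hq0 hq2
  have hPy : Phi y = p := Phi_PhiInv hp0 hp
  have hy0 : y ≤ 0 := PhiInv_nonpos hp0 hp
  have hxy : x ≤ y := by
    rw [← strictMono_Phi.le_iff_le, hPx, hPy]; exact hqp
  constructor
  · -- gphi x ≤ gphi y
    have hsq : y ^ 2 ≤ x ^ 2 := by nlinarith
    have : Real.exp (-(x ^ 2) / 2) ≤ Real.exp (-(y ^ 2) / 2) :=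
      Real.exp_le_exp.2 (by linarith)
    unfold gphi
    apply mul_le_mul_of_nonneg_left this
    positivity
  · -- gphi y / (1+ε) ≤ gphi x
    have hr := antitone_ratio hxy
    simp only at hr
    rw [hPx, hPy] at hr
    have h1 : gphi y * q ≤ gphi x * p := by
      rw [div_le_div_iff₀ hp0 hq0] at hr
      linarith
    have h2 : p ≤ q * (1 + ε) := by
      rw [div_le_iff₀ hq0] at hratio
      linarith
    have hgx := (gphi_pos x).le
    have h3 : gphi y ≤ gphi x * (1 + ε) := by
      have := mul_le_mul_of_nonneg_left h2 hgx
      nlinarith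
    rw [div_le_iff₀ (by linarith : (0:ℝ) < 1 + ε)]
    linarith
end

section
/- There is an absolute constant C > 0 such that for every measurable f : ℝⁿ → {0,1} with p := Vol(f) satisfying 0 < p ≤ 0.1, and every coordinate i ∈ {1, …, n}, one has E_{x ∼ μ_f}[xᵢ²] = (1/p) ∫_{f⁻¹(1)} xᵢ² dγₙ(x) ≤ C · ln(1/p). -/
open MeasureTheory ProbabilityTheory Real
open scoped ENNReal NNReal

/-- The standard Gaussian measure `N(0, Iₙ)` on `ℝⁿ`. -/
noncomputable def gaussMeasure (n : ℕ) : Measure (Fin n → ℝ) :=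
  Measure.pi fun _ => gaussianReal 0 1

/-- The Gaussian volume of `f⁻¹(1)` for `f : ℝⁿ → {0,1}`. -/
noncomputable def gVol {n : ℕ} (f : (Fin n → ℝ) → ℝ) : ℝ :=
  ((gaussMeasure n) {x | f x = 1}).toReal

/-- The standard Gaussian measure conditioned on `f⁻¹(1)`. -/
noncomputable def condMeasure {n : ℕ} (f : (Fin n → ℝ) → ℝ) : Measure (Fin n → ℝ) :=
  ((gaussMeasure n) {x | f x = 1})⁻¹ • (gaussMeasure n).restrict {x | f x = 1}

instance gaussMeasure_isProb (n : ℕ) : IsProbabilityMeasure (gaussMeasure n) := by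
  unfold gaussMeasure; infer_instance

lemma map_eval_gauss (n : ℕ) (i : Fin n) :
    (gaussMeasure n).map (Function.eval i) = gaussianReal 0 1 := by
  ext s hs
  rw [Measure.map_apply (measurable_pi_apply i) hs]
  have hpre : (fun x : Fin n → ℝ => x i) ⁻¹' s
      = Set.pi Set.univ (Function.update (fun _ => Set.univ) i s) := Set.eval_preimage
  rw [hpre]
  rw [gaussMeasure, Measure.pi_pi]
  rw [Finset.prod_eq_single i]
  · simp
  · intro j _ hj; simp [Function.update_of_ne hj]
  · simp

lemma gE_lt_top :
    (∫⁻ y, ENNReal.ofReal (y ^ 2 * Real.exp (y ^ 2 / 4)) ∂(gaussianReal 0 1)) < ⊤ := by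
  have hgE : Measurable fun y : ℝ => ENNReal.ofReal (y ^ 2 * Real.exp (y ^ 2 / 4)) := by
    fun_prop
  rw [gaussianReal_of_var_ne_zero 0 one_ne_zero,
    lintegral_withDensity_eq_lintegral_mul _ (measurable_gaussianPDF 0 1) hgE]
  have hbound : ∀ y : ℝ, (gaussianPDF 0 1 * fun y => ENNReal.ofReal (y ^ 2 * Real.exp (y ^ 2 / 4))) y
      ≤ ENNReal.ofReal (8 * Real.exp (-(1/8) * y ^ 2)) := by
    intro y
    simp only [Pi.mul_apply, gaussianPDF, ← ENNReal.ofReal_mul (gaussianPDFReal_nonneg 0 1 y)]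
    apply ENNReal.ofReal_le_ofReal
    have hc : (√(2 * π * (1:ℝ≥0)))⁻¹ ≤ 1 := by
      rw [inv_le_one_iff₀]
      right
      rw [show ((2:ℝ) * π * (1:ℝ≥0)) = 2 * π by norm_num]
      have : (1:ℝ) ≤ 2 * π := by nlinarith [Real.pi_gt_three]
      nlinarith [Real.sq_sqrt (by linarith : (0:ℝ) ≤ 2 * π),
        Real.sqrt_nonneg (2 * π)]
    have hy2 : y ^ 2 ≤ 8 * Real.exp (y ^ 2 / 8) := by
      nlinarith [Real.add_one_le_exp (y ^ 2 / 8)]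
    simp only [gaussianPDFReal]
    have hexp : Real.exp (-(y - 0) ^ 2 / (2 * (1:ℝ≥0))) * (Real.exp (y ^ 2 / 8)
        * Real.exp (y ^ 2 / 4)) = Real.exp (-(1/8) * y ^ 2) := by
      rw [show ((2:ℝ) * ((1:ℝ≥0):ℝ)) = 2 by norm_num, ← Real.exp_add, ← Real.exp_add]
      congr 1
      ring
    calc (√(2 * π * (1:ℝ≥0)))⁻¹ * Real.exp (-(y - 0) ^ 2 / (2 * (1:ℝ≥0)))
          * (y ^ 2 * Real.exp (y ^ 2 / 4))
        ≤ 1 * Real.exp (-(y - 0) ^ 2 / (2 * (1:ℝ≥0)))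
          * (8 * Real.exp (y ^ 2 / 8) * Real.exp (y ^ 2 / 4)) := by
          apply mul_le_mul
          · exact mul_le_mul hc le_rfl (Real.exp_nonneg _) zero_le_one
          · exact mul_le_mul_of_nonneg_right hy2 (Real.exp_nonneg _)
          · positivity
          · positivity
      _ = 8 * Real.exp (-(1/8) * y ^ 2) := by
          rw [← hexp]; ring
  calc ∫⁻ y, (gaussianPDF 0 1 * fun y => ENNReal.ofReal (y ^ 2 * Real.exp (y ^ 2 / 4))) y
      ≤ ∫⁻ y, ENNReal.ofReal (8 * Real.exp (-(1/8) * y ^ 2)) := lintegral_mono hbound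
    _ < ⊤ := ((integrable_exp_neg_mul_sq (by norm_num : (0:ℝ) < 1/8)).const_mul
        8).lintegral_lt_top

theorem stmt8 :
    ∃ C : ℝ, 0 < C ∧
      ∀ (n : ℕ) (f : (Fin n → ℝ) → ℝ) (i : Fin n),
        Measurable f → (∀ x, f x = 0 ∨ f x = 1) →
        0 < gVol f → gVol f ≤ 0.1 →
        (∫ x, (x i) ^ 2 ∂condMeasure f)
            = (1 / gVol f) * ∫ x in {x | f x = 1}, (x i) ^ 2 ∂gaussMeasure n ∧
          (∫ x, (x i) ^ 2 ∂condMeasure f) ≤ C * Real.log (1 / gVol f) := by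
  classical
  set L : ℝ≥0∞ := ∫⁻ y, ENNReal.ofReal (y ^ 2 * Real.exp (y ^ 2 / 4)) ∂(gaussianReal 0 1)
    with hLdef
  set K : ℝ := L.toReal with hKdef
  have hK0 : 0 ≤ K := ENNReal.toReal_nonneg
  refine ⟨4 + K, by linarith, ?_⟩
  intro n f i hf _ hp hp1
  set p : ℝ := gVol f with hpdef
  set A : Set (Fin n → ℝ) := {x | f x = 1} with hAdef
  have hA : MeasurableSet A := hf (measurableSet_singleton 1)
  set γ : Measure (Fin n → ℝ) := gaussMeasure n with hγdef
  have hγA_ne_top : γ A ≠ ⊤ := measure_ne_top _ _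
  have hpA : p = (γ A).toReal := rfl
  -- Equality part
  have heq : (∫ x, (x i) ^ 2 ∂condMeasure f)
      = (1 / p) * ∫ x in A, (x i) ^ 2 ∂γ := by
    rw [condMeasure, integral_smul_measure, ENNReal.toReal_inv, smul_eq_mul, one_div]
    rfl
  refine ⟨heq, ?_⟩
  rw [heq]
  set q : ℝ := Real.log (1 / p) with hqdef
  have hq1 : 1 ≤ q := by
    have h10 : (10:ℝ) ≤ 1 / p := by
      rw [le_div_iff₀ hp]
      norm_num at hp1 ⊢
      linarith
    have hlog10 : Real.log 10 ≤ q := Real.log_le_log (by norm_num) h10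
    have hexp10 : Real.exp 1 ≤ 10 := by
      nlinarith [Real.exp_one_lt_d9]
    have : Real.log (Real.exp 1) ≤ Real.log 10 := Real.log_le_log (Real.exp_pos 1) hexp10
    rw [Real.log_exp] at this
    linarith
  set t : ℝ := 4 * q with htdef
  have ht0 : 0 ≤ t := by linarith
  have hplog : p = Real.exp (-q) := by
    rw [hqdef, one_div, Real.log_inv, neg_neg, Real.exp_log hp]
  -- pointwise bound
  have hpt : ∀ y : ℝ, y ^ 2 ≤ t + p * (y ^ 2 * Real.exp (y ^ 2 / 4)) := by
    intro y
    rcases le_or_gt (y ^ 2) t with h | h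
    · have : 0 ≤ p * (y ^ 2 * Real.exp (y ^ 2 / 4)) := by positivity
      linarith
    · have hrw : p * (y ^ 2 * Real.exp (y ^ 2 / 4))
          = y ^ 2 * Real.exp (-q + y ^ 2 / 4) := by
        rw [hplog, Real.exp_add]; ring
      have harg : 0 ≤ -q + y ^ 2 / 4 := by
        rw [htdef] at h; linarith
      have hexp1 : (1:ℝ) ≤ Real.exp (-q + y ^ 2 / 4) := Real.one_le_exp harg
      have : y ^ 2 * 1 ≤ y ^ 2 * Real.exp (-q + y ^ 2 / 4) :=
        mul_le_mul_of_nonneg_left hexp1 (sq_nonneg y)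
      rw [hrw]
      nlinarith
  -- lintegral chain
  have hmeas_evi : Measurable fun x : Fin n → ℝ => x i := measurable_pi_apply i
  have hgE : Measurable fun y : ℝ => ENNReal.ofReal (y ^ 2 * Real.exp (y ^ 2 / 4)) := by
    fun_prop
  have hgcomp : Measurable fun x : Fin n → ℝ =>
      ENNReal.ofReal ((x i) ^ 2 * Real.exp ((x i) ^ 2 / 4)) := hgE.comp hmeas_evi
  have hL' : (∫⁻ x, ENNReal.ofReal ((x i) ^ 2 * Real.exp ((x i) ^ 2 / 4)) ∂γ) = L := by
    rw [hLdef, ← map_eval_gauss n i, lintegral_map hgE hmeas_evi]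
  have hLtop : L ≠ ⊤ := gE_lt_top.ne
  have key : (∫⁻ x in A, ENNReal.ofReal ((x i) ^ 2) ∂γ)
      ≤ ENNReal.ofReal t * γ A + ENNReal.ofReal p * L := by
    calc (∫⁻ x in A, ENNReal.ofReal ((x i) ^ 2) ∂γ)
        ≤ ∫⁻ x in A, (ENNReal.ofReal t
            + ENNReal.ofReal p * ENNReal.ofReal ((x i) ^ 2 * Real.exp ((x i) ^ 2 / 4))) ∂γ := by
          apply lintegral_mono
          intro x
          dsimp only
          rw [← ENNReal.ofReal_mul hp.le, ← ENNReal.ofReal_add ht0 (by positivity)]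
          exact ENNReal.ofReal_le_ofReal (hpt (x i))
      _ = ENNReal.ofReal t * γ A
            + ENNReal.ofReal p * ∫⁻ x in A, ENNReal.ofReal ((x i) ^ 2 * Real.exp ((x i) ^ 2 / 4)) ∂γ := by
          rw [lintegral_add_left measurable_const, setLIntegral_const,
            lintegral_const_mul _ hgcomp]
      _ ≤ ENNReal.ofReal t * γ A + ENNReal.ofReal p * L := by
          gcongr
          rw [← hL']
          exact setLIntegral_le_lintegral _ _
  -- convert to real integral
  have hI : (∫ x in A, (x i) ^ 2 ∂γ)
      = (∫⁻ x in A, ENNReal.ofReal ((x i) ^ 2) ∂γ).toReal := by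
    exact integral_eq_lintegral_of_nonneg_ae
      (Filter.Eventually.of_forall fun x => sq_nonneg _)
      ((hmeas_evi.pow_const 2).aestronglyMeasurable)
  have hRHS_ne_top : ENNReal.ofReal t * γ A + ENNReal.ofReal p * L ≠ ⊤ := by
    apply ENNReal.add_ne_top.mpr
    constructor
    · exact ENNReal.mul_ne_top ENNReal.ofReal_ne_top hγA_ne_top
    · exact ENNReal.mul_ne_top ENNReal.ofReal_ne_top hLtop
  have hIle : (∫ x in A, (x i) ^ 2 ∂γ) ≤ t * p + p * K := by
    rw [hI]
    calc (∫⁻ x in A, ENNReal.ofReal ((x i) ^ 2) ∂γ).toReal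
        ≤ (ENNReal.ofReal t * γ A + ENNReal.ofReal p * L).toReal :=
          ENNReal.toReal_mono hRHS_ne_top key
      _ = t * p + p * K := by
          rw [ENNReal.toReal_add (ENNReal.mul_ne_top ENNReal.ofReal_ne_top hγA_ne_top)
              (ENNReal.mul_ne_top ENNReal.ofReal_ne_top hLtop),
            ENNReal.toReal_mul, ENNReal.toReal_mul,
            ENNReal.toReal_ofReal ht0, ENNReal.toReal_ofReal hp.le, ← hpA, hKdef]
  -- finish
  have hfinal : (1 / p) * ∫ x in A, (x i) ^ 2 ∂γ ≤ t + K := by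
    have h1 : (1 / p) * ∫ x in A, (x i) ^ 2 ∂γ ≤ (1 / p) * (t * p + p * K) :=
      mul_le_mul_of_nonneg_left hIle (by positivity)
    have h2 : (1 / p) * (t * p + p * K) = t + K := by
      field_simp
    linarith
  have : t + K ≤ (4 + K) * q := by
    have : K * 1 ≤ K * q := mul_le_mul_of_nonneg_left hq1 hK0
    rw [htdef]
    nlinarith
  linarith
end
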